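/- Let S₀ > 0 and let σ: ℝ → (0,∞) be differentiable. For k ∈ ℝ set d₁(k) = −k/σ(k) + σ(k)/2, d₂(k) = −k/σ(k) − σ(k)/2, f₁(k) = −d₁(k), f₂(k) = −d₂(k). Define the Black–Scholes Put price P(K) = S₀ e^k Φ(−d₂(k)) − S₀ Φ(−d₁(k)) with k = log(K/S₀), for K > 0, where Φ is the standard normal cumulative distribution function. If K ↦ P(K) is convex on (0,∞), then f₁ and f₂ are strictly increasing; more precisely, for every k, f₁'(k) = (1/σ(k))(1 − σ'(k) f₂(k)) > 0 and f₂'(k) = (1/σ(k))(1 − σ'(k) f₁(k)) > 0. -/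

import Mathlib

/-!
Write `f₁ = -d₁`, `f₂ = -d₂` and `φ` for the standard normal density. Since `f₂² - f₁² = 2k`,
`S₀ φ(f₁) = K φ(f₂)`, and with `f₂ - f₁ = σ` this gives `P'(K) = Φ(f₂) + φ(f₂) σ'(k)` and
`P(K) - K P'(K) = -S₀ (Φ(f₁) + φ(f₁) σ'(k))`. The price satisfies `max(0, K - S₀) ≤ P(K) ≤ K`
(the lower bound by monotonicity of `e^{x²/2} Φ(x)`), so convexity, through the tangent line of `P`,
puts both quantities `Φ(fᵢ) + φ(fᵢ) σ'` in `[0, 1]`. Mills' inequality `φ(x) + x Φ(x) > 0`, at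
`x = fᵢ` and at `x = -fᵢ`, turns this into `σ' fᵢ < 1`, which is the positivity of
`fⱼ' = (1 - σ' fᵢ) / σ`.
-/

/-- The standard normal cumulative distribution function
`Φ(x) = ∫_{-∞}^{x} e^{-t²/2}/√(2π) dt`. -/
noncomputable def stdNormalCDF (x : ℝ) : ℝ :=
  ∫ t in Set.Iic x, Real.exp (-(t ^ 2) / 2) / Real.sqrt (2 * Real.pi)

open MeasureTheory ProbabilityTheory Real Set Filter Topology

noncomputable def stdNormalPDF (x : ℝ) : ℝ := exp (-(x ^ 2) / 2) / √(2 * π)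

lemma stdNormalPDF_eq_gaussianPDFReal : stdNormalPDF = gaussianPDFReal 0 1 := by
  ext x
  simp [stdNormalPDF, gaussianPDFReal, div_eq_inv_mul]

lemma stdNormalPDF_pos (x : ℝ) : 0 < stdNormalPDF x := by
  rw [stdNormalPDF_eq_gaussianPDFReal]
  exact gaussianPDFReal_pos _ _ _ one_ne_zero

lemma integrable_stdNormalPDF : Integrable stdNormalPDF := by
  rw [stdNormalPDF_eq_gaussianPDFReal]
  exact integrable_gaussianPDFReal 0 1

lemma integral_stdNormalPDF : ∫ x, stdNormalPDF x = 1 := by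
  rw [stdNormalPDF_eq_gaussianPDFReal]
  exact integral_gaussianPDFReal_eq_one 0 one_ne_zero

lemma stdNormalPDF_neg (x : ℝ) : stdNormalPDF (-x) = stdNormalPDF x := by
  simp [stdNormalPDF]

lemma continuous_stdNormalPDF : Continuous stdNormalPDF := by
  unfold stdNormalPDF
  fun_prop

lemma hasDerivAt_stdNormalPDF (x : ℝ) : HasDerivAt stdNormalPDF (-x * stdNormalPDF x) x := by
  have h := ((hasDerivAt_pow 2 x).neg.div_const 2).exp.div_const √(2 * π)
  refine h.congr_deriv ?_
  simp only [stdNormalPDF, Pi.neg_apply]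
  push_cast
  ring

lemma stdNormalPDF_eq_exp_mul {a b c : ℝ} (h : b ^ 2 - a ^ 2 = 2 * c) :
    stdNormalPDF a = exp c * stdNormalPDF b := by
  rw [stdNormalPDF, stdNormalPDF, mul_div_assoc', ← exp_add]
  congr 2
  linarith

lemma tendsto_stdNormalPDF_atBot : Tendsto stdNormalPDF atBot (𝓝 0) := by
  have hsq : Tendsto (fun x : ℝ => x ^ 2) atBot atTop := by
    convert (tendsto_pow_atTop (α := ℝ) two_ne_zero).comp tendsto_neg_atBot_atTop using 1
    ext x
    simp
  have h : Tendsto (fun x : ℝ => -(x ^ 2) / 2) atBot atBot :=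
    (tendsto_neg_atTop_atBot.comp hsq).atBot_div_const two_pos
  have := (tendsto_exp_atBot.comp h).div_const √(2 * π)
  rwa [zero_div] at this

lemma stdNormalCDF_eq_setIntegral (x : ℝ) : stdNormalCDF x = ∫ t in Iic x, stdNormalPDF t := rfl

lemma hasDerivAt_stdNormalCDF (x : ℝ) : HasDerivAt stdNormalCDF (stdNormalPDF x) x := by
  have hsplit : ∀ u, stdNormalCDF u = stdNormalCDF 0 + ∫ t in (0 : ℝ)..u, stdNormalPDF t := by
    intro u
    rw [stdNormalCDF_eq_setIntegral, stdNormalCDF_eq_setIntegral,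
      ← intervalIntegral.integral_Iic_sub_Iic integrable_stdNormalPDF.integrableOn
        integrable_stdNormalPDF.integrableOn]
    ring
  rw [show stdNormalCDF = _ from funext hsplit]
  exact (intervalIntegral.integral_hasDerivAt_right integrable_stdNormalPDF.intervalIntegrable
    (continuous_stdNormalPDF.stronglyMeasurableAtFilter _ _)
    continuous_stdNormalPDF.continuousAt).const_add _

lemma stdNormalCDF_pos (x : ℝ) : 0 < stdNormalCDF x := by
  rw [stdNormalCDF_eq_setIntegral, setIntegral_pos_iff_support_of_nonneg_ae
    (ae_of_all _ fun t => (stdNormalPDF_pos t).le) integrable_stdNormalPDF.integrableOn,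
    Function.support_eq_univ fun t => (stdNormalPDF_pos t).ne', univ_inter]
  simp

lemma stdNormalCDF_le_one (x : ℝ) : stdNormalCDF x ≤ 1 := by
  rw [stdNormalCDF_eq_setIntegral, ← integral_stdNormalPDF]
  exact setIntegral_le_integral integrable_stdNormalPDF
    (ae_of_all _ fun t => (stdNormalPDF_pos t).le)

lemma stdNormalCDF_neg (x : ℝ) : stdNormalCDF (-x) = 1 - stdNormalCDF x := by
  have hIoi : stdNormalCDF (-x) = ∫ t in Ioi x, stdNormalPDF t := by
    rw [stdNormalCDF_eq_setIntegral, ← integral_comp_neg_Ioi]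
    simp only [stdNormalPDF_neg]
  rw [hIoi, eq_sub_iff_add_eq', stdNormalCDF_eq_setIntegral, ← integral_stdNormalPDF]
  exact intervalIntegral.integral_Iic_add_Ioi integrable_stdNormalPDF.integrableOn
    integrable_stdNormalPDF.integrableOn

lemma stdNormalCDF_le_mul_exp (x : ℝ) :
    stdNormalCDF x ≤ exp (1 / 2) / √(2 * π) * exp x := by
  have hpdf : ∀ t, stdNormalPDF t ≤ exp (1 / 2) / √(2 * π) * exp t := by
    intro t
    rw [stdNormalPDF, div_mul_eq_mul_div, ← exp_add]
    gcongr
    nlinarith [sq_nonneg (t + 1)]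
  calc stdNormalCDF x ≤ ∫ t in Iic x, exp (1 / 2) / √(2 * π) * exp t :=
        setIntegral_mono_on integrable_stdNormalPDF.integrableOn
          ((integrableOn_exp_Iic x).const_mul _) measurableSet_Iic fun t _ => hpdf t
    _ = exp (1 / 2) / √(2 * π) * exp x := by rw [integral_const_mul, integral_exp_Iic]

lemma tendsto_mul_stdNormalCDF_atBot : Tendsto (fun x => x * stdNormalCDF x) atBot (𝓝 0) := by
  set C := exp (1 / 2) / √(2 * π)
  have hlower : Tendsto (fun x => C * (x * exp x)) atBot (𝓝 0) := by
    have h := ((tendsto_pow_mul_exp_neg_atTop_nhds_zero 1).comp tendsto_neg_atBot_atTop).neg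
    simpa using h.const_mul C
  refine tendsto_of_tendsto_of_tendsto_of_le_of_le' hlower tendsto_const_nhds ?_ ?_
  · filter_upwards [eventually_le_atBot 0] with x hx
    nlinarith [stdNormalCDF_le_mul_exp x]
  · filter_upwards [eventually_le_atBot 0] with x hx
    exact mul_nonpos_of_nonpos_of_nonneg hx (stdNormalCDF_pos x).le

/-- Mills' inequality `Φ(x) < φ(x) / (-x)` for `x < 0`, in a form valid for all `x`. -/
lemma stdNormalPDF_add_mul_stdNormalCDF_pos (x : ℝ) :
    0 < stdNormalPDF x + x * stdNormalCDF x := by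
  set M := fun x => stdNormalPDF x + x * stdNormalCDF x
  have hM : ∀ y, HasDerivAt M (stdNormalCDF y) y := fun y =>
    ((hasDerivAt_stdNormalPDF y).add
      ((hasDerivAt_id y).mul (hasDerivAt_stdNormalCDF y))).congr_deriv (by simp only [id]; ring)
  have hmono : StrictMono M :=
    strictMono_of_deriv_pos fun y => (hM y).deriv ▸ stdNormalCDF_pos y
  have hlim : Tendsto M atBot (𝓝 0) := by
    simpa using tendsto_stdNormalPDF_atBot.add tendsto_mul_stdNormalCDF_atBot
  have hM0 : 0 ≤ M (x - 1) := le_of_tendsto hlim <| by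
    filter_upwards [eventually_le_atBot (x - 1)] with y hy using hmono.monotone hy
  exact hM0.trans_lt (hmono (sub_one_lt x))

lemma strictMono_exp_mul_stdNormalCDF : StrictMono fun x => exp (x ^ 2 / 2) * stdNormalCDF x := by
  have hG : ∀ y, HasDerivAt (fun x => exp (x ^ 2 / 2) * stdNormalCDF x)
      (exp (y ^ 2 / 2) * (stdNormalPDF y + y * stdNormalCDF y)) y := fun y =>
    (((hasDerivAt_pow 2 y).div_const 2).exp.mul (hasDerivAt_stdNormalCDF y)).congr_deriv
      (by push_cast; ring)
  exact strictMono_of_deriv_pos fun y =>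
    (hG y).deriv ▸ mul_pos (exp_pos _) (stdNormalPDF_add_mul_stdNormalCDF_pos y)

lemma stdNormalCDF_le_exp_mul_stdNormalCDF {a b c : ℝ} (hab : a ≤ b) (h : b ^ 2 - a ^ 2 = 2 * c) :
    stdNormalCDF a ≤ exp c * stdNormalCDF b := by
  have hG := strictMono_exp_mul_stdNormalCDF.monotone hab
  have hb : exp (b ^ 2 / 2) = exp (a ^ 2 / 2) * exp c := by
    rw [← exp_add]
    congr 1
    linarith
  rw [hb, mul_assoc] at hG
  exact le_of_mul_le_mul_left hG (exp_pos _)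

lemma mul_lt_one_of_stdNormalCDF_add_stdNormalPDF_mul_mem_Icc {x s : ℝ}
    (h : stdNormalCDF x + stdNormalPDF x * s ∈ Icc 0 1) : s * x < 1 := by
  obtain ⟨h0, h1⟩ := h
  have hφ := stdNormalPDF_pos x
  rcases le_total x 0 with hx | hx
  · have hmills := stdNormalPDF_add_mul_stdNormalCDF_pos x
    nlinarith [mul_nonpos_of_nonpos_of_nonneg hx h0]
  · have hmills := stdNormalPDF_add_mul_stdNormalCDF_pos (-x)
    rw [stdNormalPDF_neg, stdNormalCDF_neg] at hmills
    nlinarith [mul_nonneg hx (sub_nonneg.2 h1)]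

lemma ConvexOn.add_mul_sub_le_of_hasDerivAt {S : Set ℝ} {f : ℝ → ℝ} {x y f' : ℝ}
    (hf : ConvexOn ℝ S f) (hx : x ∈ S) (hy : y ∈ S) (hf' : HasDerivAt f f' x) :
    f x + f' * (y - x) ≤ f y := by
  rcases lt_trichotomy y x with hyx | rfl | hxy
  · have h := hf.slope_le_of_hasDerivAt hy hx hyx hf'
    rw [slope_def_field, div_le_iff₀ (sub_pos.2 hyx)] at h
    linarith
  · simp
  · have h := hf.le_slope_of_hasDerivAt hx hy hxy hf'
    rw [slope_def_field, le_div_iff₀ (sub_pos.2 hxy)] at h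
    linarith

lemma forall_pos_mul_add_nonpos_iff {a b : ℝ} : (∀ x > 0, a * x + b ≤ 0) ↔ a ≤ 0 ∧ b ≤ 0 := by
  refine ⟨fun h => ⟨?_, ?_⟩, fun ⟨ha, hb⟩ x hx => by nlinarith⟩
  · by_contra! ha
    have := h ((|b| + 1) / a) (by positivity)
    rw [mul_div_cancel₀ _ ha.ne'] at this
    linarith [neg_abs_le b]
  · have hlim := ((show Continuous fun x : ℝ => a * x + b by fun_prop).tendsto 0).mono_left
      (nhdsWithin_le_nhds (s := Ioi 0))
    rw [mul_zero, zero_add] at hlim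
    exact le_of_tendsto hlim (eventually_nhdsWithin_of_forall h)

/-- `bsF₁ σ` and `bsF₂ σ` are the functions `f₁ = -d₁` and `f₂ = -d₂`. -/
noncomputable def bsF₁ (σ : ℝ → ℝ) (k : ℝ) : ℝ := k / σ k - σ k / 2

noncomputable def bsF₂ (σ : ℝ → ℝ) (k : ℝ) : ℝ := k / σ k + σ k / 2

noncomputable def bsPut (S₀ : ℝ) (σ : ℝ → ℝ) (K : ℝ) : ℝ :=
  K * stdNormalCDF (bsF₂ σ (log (K / S₀))) - S₀ * stdNormalCDF (bsF₁ σ (log (K / S₀)))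

section BlackScholes

variable {S₀ : ℝ} {σ : ℝ → ℝ} {k σ' : ℝ}

lemma bsF₂_sub_bsF₁ (σ : ℝ → ℝ) (k : ℝ) : bsF₂ σ k - bsF₁ σ k = σ k := by
  simp only [bsF₁, bsF₂]
  ring

lemma bsF₂_sq_sub_bsF₁_sq (hσ : σ k ≠ 0) : bsF₂ σ k ^ 2 - bsF₁ σ k ^ 2 = 2 * k := by
  simp only [bsF₁, bsF₂]
  field_simp
  ring

lemma bsF₁_le_bsF₂ (hσ : 0 ≤ σ k) : bsF₁ σ k ≤ bsF₂ σ k := by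
  simp only [bsF₁, bsF₂]
  linarith

lemma stdNormalPDF_bsF₁ (hσ : σ k ≠ 0) :
    stdNormalPDF (bsF₁ σ k) = exp k * stdNormalPDF (bsF₂ σ k) :=
  stdNormalPDF_eq_exp_mul (bsF₂_sq_sub_bsF₁_sq hσ)

lemma stdNormalCDF_bsF₁_le (hσ : 0 < σ k) :
    stdNormalCDF (bsF₁ σ k) ≤ exp k * stdNormalCDF (bsF₂ σ k) :=
  stdNormalCDF_le_exp_mul_stdNormalCDF (bsF₁_le_bsF₂ hσ.le) (bsF₂_sq_sub_bsF₁_sq hσ.ne')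

lemma stdNormalCDF_neg_bsF₂_le (hσ : 0 < σ k) :
    stdNormalCDF (-bsF₂ σ k) ≤ exp (-k) * stdNormalCDF (-bsF₁ σ k) :=
  stdNormalCDF_le_exp_mul_stdNormalCDF (neg_le_neg (bsF₁_le_bsF₂ hσ.le))
    (by linarith [neg_sq (bsF₁ σ k), neg_sq (bsF₂ σ k), bsF₂_sq_sub_bsF₁_sq hσ.ne'])

lemma hasDerivAt_bsF₁ (hσ : HasDerivAt σ σ' k) (hσk : σ k ≠ 0) :
    HasDerivAt (bsF₁ σ) ((1 - σ' * bsF₂ σ k) / σ k) k := by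
  refine (((hasDerivAt_id k).div hσ hσk).sub (hσ.div_const 2)).congr_deriv ?_
  simp only [bsF₂, id]
  field_simp
  ring

lemma hasDerivAt_bsF₂ (hσ : HasDerivAt σ σ' k) (hσk : σ k ≠ 0) :
    HasDerivAt (bsF₂ σ) ((1 - σ' * bsF₁ σ k) / σ k) k := by
  refine (((hasDerivAt_id k).div hσ hσk).add (hσ.div_const 2)).congr_deriv ?_
  simp only [bsF₁, id]
  field_simp
  ring

lemma bsPut_le_self (hS₀ : 0 ≤ S₀) {K : ℝ} (hK : 0 ≤ K) : bsPut S₀ σ K ≤ K := by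
  have h₂ := stdNormalCDF_le_one (bsF₂ σ (log (K / S₀)))
  have h₁ := stdNormalCDF_pos (bsF₁ σ (log (K / S₀)))
  rw [bsPut]
  nlinarith

lemma bsPut_mul_exp (hS₀ : S₀ ≠ 0) :
    bsPut S₀ σ (S₀ * exp k) =
      S₀ * (exp k * stdNormalCDF (bsF₂ σ k) - stdNormalCDF (bsF₁ σ k)) := by
  rw [bsPut, mul_div_cancel_left₀ _ hS₀, log_exp]
  ring

lemma bsPut_mul_exp_nonneg (hS₀ : 0 < S₀) (hσ : 0 < σ k) : 0 ≤ bsPut S₀ σ (S₀ * exp k) := by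
  rw [bsPut_mul_exp hS₀.ne']
  exact mul_nonneg hS₀.le (sub_nonneg.2 (stdNormalCDF_bsF₁_le hσ))

lemma mul_exp_sub_le_bsPut (hS₀ : 0 < S₀) (hσ : 0 < σ k) :
    S₀ * exp k - S₀ ≤ bsPut S₀ σ (S₀ * exp k) := by
  have h := stdNormalCDF_neg_bsF₂_le hσ
  rw [stdNormalCDF_neg, stdNormalCDF_neg, exp_neg, ← div_eq_inv_mul,
    le_div_iff₀' (exp_pos k)] at h
  rw [bsPut_mul_exp hS₀.ne']
  nlinarith

lemma hasDerivAt_bsPut (hS₀ : 0 < S₀) (hσ : HasDerivAt σ σ' k) (hσk : σ k ≠ 0) :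
    HasDerivAt (bsPut S₀ σ) (stdNormalCDF (bsF₂ σ k) + stdNormalPDF (bsF₂ σ k) * σ')
      (S₀ * exp k) := by
  set K₀ := S₀ * exp k with hK₀_def
  have hK₀ : 0 < K₀ := by positivity
  have hlogK₀ : log (K₀ / S₀) = k := by rw [mul_div_cancel_left₀ _ hS₀.ne', log_exp]
  have hlog : HasDerivAt (fun K => log (K / S₀)) K₀⁻¹ K₀ :=
    (((hasDerivAt_id K₀).div_const S₀).log (div_pos hK₀ hS₀).ne').congr_deriv
      (by simp only [id]; field_simp)
  have h₁ := (hasDerivAt_stdNormalCDF _).comp K₀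
    ((hasDerivAt_bsF₁ hσ hσk).comp_of_eq K₀ hlog hlogK₀.symm)
  have h₂ := (hasDerivAt_stdNormalCDF _).comp K₀
    ((hasDerivAt_bsF₂ hσ hσk).comp_of_eq K₀ hlog hlogK₀.symm)
  refine ((hasDerivAt_id K₀).mul h₂ |>.sub (h₁.const_mul S₀)).congr_deriv ?_
  simp only [Function.comp_apply, id, hlogK₀]
  rw [stdNormalPDF_bsF₁ hσk, hK₀_def]
  field_simp
  linear_combination stdNormalPDF (bsF₂ σ k) * σ' * bsF₂_sub_bsF₁ σ k

lemma bsPut_deriv_mem_Icc (hS₀ : 0 < S₀) (hconv : ConvexOn ℝ (Ioi 0) (bsPut S₀ σ))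
    (hσ : HasDerivAt σ σ' k) (hσk : 0 < σ k) :
    stdNormalCDF (bsF₂ σ k) + stdNormalPDF (bsF₂ σ k) * σ' ∈ Icc 0 1 ∧
      stdNormalCDF (bsF₁ σ k) + stdNormalPDF (bsF₁ σ k) * σ' ∈ Icc 0 1 := by
  set K₀ := S₀ * exp k
  set D := stdNormalCDF (bsF₂ σ k) + stdNormalPDF (bsF₂ σ k) * σ'
  have hK₀ : 0 < K₀ := by positivity
  -- The tangent line at `K₀` stays below `bsPut S₀ σ K ≤ K`: its slope is at most `1` and its
  -- intercept, which is `-S₀` times the second quantity, is nonpositive.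
  have htangent : ∀ K > 0, (D - 1) * K + (bsPut S₀ σ K₀ - D * K₀) ≤ 0 := fun K hK => by
    have := hconv.add_mul_sub_le_of_hasDerivAt hK₀ hK (hasDerivAt_bsPut hS₀ hσ hσk.ne')
    linarith [bsPut_le_self (σ := σ) hS₀.le hK.le]
  obtain ⟨hD, hintercept⟩ := forall_pos_mul_add_nonpos_iff.1 htangent
  have hintercept_eq : bsPut S₀ σ K₀ - D * K₀ =
      -S₀ * (stdNormalCDF (bsF₁ σ k) + stdNormalPDF (bsF₁ σ k) * σ') := by
    rw [bsPut_mul_exp hS₀.ne', stdNormalPDF_bsF₁ hσk.ne']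
    ring
  have hput₀ := bsPut_mul_exp_nonneg hS₀ hσk
  have hput₁ := mul_exp_sub_le_bsPut hS₀ hσk
  refine ⟨⟨?_, sub_nonpos.1 hD⟩, ⟨?_, ?_⟩⟩ <;> nlinarith

end BlackScholes

/-- generalized Fukasawa lemma: if the Black–Scholes Put price
`P(K) = S₀ e^k Φ(−d₂(k)) − S₀ Φ(−d₁(k))`, `k = log(K/S₀)`, is convex on `(0,∞)`,
then `f₁ = −d₁` and `f₂ = −d₂` are strictly increasing, with
`f₁'(k) = (1/σ(k))(1 − σ'(k) f₂(k)) > 0` and `f₂'(k) = (1/σ(k))(1 − σ'(k) f₁(k)) > 0`. -/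
theorem fukasawa_f1_f2_strictMono
    (S₀ : ℝ) (hS₀ : 0 < S₀)
    (σ : ℝ → ℝ) (hσpos : ∀ k, 0 < σ k) (hσdiff : Differentiable ℝ σ)
    (d₁ d₂ f₁ f₂ : ℝ → ℝ)
    (hd₁ : ∀ k, d₁ k = -k / σ k + σ k / 2)
    (hd₂ : ∀ k, d₂ k = -k / σ k - σ k / 2)
    (hf₁ : ∀ k, f₁ k = -d₁ k)
    (hf₂ : ∀ k, f₂ k = -d₂ k)
    (P : ℝ → ℝ)
    (hP : ∀ K, 0 < K → P K =
      S₀ * Real.exp (Real.log (K / S₀)) * stdNormalCDF (-(d₂ (Real.log (K / S₀)))) -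
        S₀ * stdNormalCDF (-(d₁ (Real.log (K / S₀)))))
    (hconv : ConvexOn ℝ (Set.Ioi (0 : ℝ)) P) :
    StrictMono f₁ ∧ StrictMono f₂ ∧
    ∀ k : ℝ,
      deriv f₁ k = (1 / σ k) * (1 - deriv σ k * f₂ k) ∧ 0 < deriv f₁ k ∧
      deriv f₂ k = (1 / σ k) * (1 - deriv σ k * f₁ k) ∧ 0 < deriv f₂ k := by
  have hf₁σ : f₁ = bsF₁ σ := funext fun k => by rw [hf₁, hd₁, bsF₁]; ring
  have hf₂σ : f₂ = bsF₂ σ := funext fun k => by rw [hf₂, hd₂, bsF₂]; ring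
  subst hf₁σ hf₂σ
  have hPut : ConvexOn ℝ (Ioi 0) (bsPut S₀ σ) := hconv.congr fun K hK => by
    rw [hP K hK, ← hf₁, ← hf₂, exp_log (div_pos hK hS₀), mul_div_cancel₀ _ hS₀.ne', bsPut]
  have hderiv₁ k : deriv (bsF₁ σ) k = 1 / σ k * (1 - deriv σ k * bsF₂ σ k) := by
    rw [(hasDerivAt_bsF₁ (hσdiff k).hasDerivAt (hσpos k).ne').deriv, one_div_mul_eq_div]
  have hderiv₂ k : deriv (bsF₂ σ) k = 1 / σ k * (1 - deriv σ k * bsF₁ σ k) := by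
    rw [(hasDerivAt_bsF₂ (hσdiff k).hasDerivAt (hσpos k).ne').deriv, one_div_mul_eq_div]
  have hpos k : 0 < deriv (bsF₁ σ) k ∧ 0 < deriv (bsF₂ σ) k := by
    obtain ⟨h₂, h₁⟩ := bsPut_deriv_mem_Icc hS₀ hPut (hσdiff k).hasDerivAt (hσpos k)
    have hlt₁ := mul_lt_one_of_stdNormalCDF_add_stdNormalPDF_mul_mem_Icc h₁
    have hlt₂ := mul_lt_one_of_stdNormalCDF_add_stdNormalPDF_mul_mem_Icc h₂
    rw [hderiv₁, hderiv₂]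
    exact ⟨mul_pos (one_div_pos.2 (hσpos k)) (sub_pos.2 hlt₂),
      mul_pos (one_div_pos.2 (hσpos k)) (sub_pos.2 hlt₁)⟩
  exact ⟨strictMono_of_deriv_pos fun k => (hpos k).1, strictMono_of_deriv_pos fun k => (hpos k).2,
    fun k => ⟨hderiv₁ k, (hpos k).1, hderiv₂ k, (hpos k).2⟩⟩
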